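/- If a sequent Γ → C is derivable in the Lambek calculus with brackets Lb* (allowing empty antecedents), then its bracket-free translation — replacing brackets by fresh variables r, s, replacing ⟨⟩A by r·A·s and []⁻¹A by r\A/s, and replacing each meta-bracket [Δ] in the antecedent by the sequence r, Δ, s — is derivable in the Lambek calculus L* (allowing empty antecedents). -/

import Mathlib

/-- Formulas of the Lambek calculus with brackets `Lb*`. -/
inductive Fm where
  | var : ℕ → Fm
  | mul : Fm → Fm → Fm        -- A · B
  | ldiv : Fm → Fm → Fm       -- A \ B
  | rdiv : Fm → Fm → Fm       -- B / A   (rdiv B A)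
  | dia : Fm → Fm             -- ⟨⟩A
  | box : Fm → Fm             -- []⁻¹A

/-- Items of a configuration: formulas or bracketed configurations. -/
inductive Item where
  | fml : Fm → Item
  | brk : List Item → Item

/-- Configurations (bracketed antecedents): sequences of items. -/
abbrev Cfg := List Item

/-- Configuration contexts: a configuration with a hole, possibly nested
inside brackets. -/
inductive Ctx where
  | top : Cfg → Cfg → Ctx
  | nest : Cfg → Ctx → Cfg → Ctx

/-- Plugging a configuration into the hole of a context. -/
def plug : Ctx → Cfg → Cfg
  | .top pre post, Γ => pre ++ Γ ++ post
  | .nest pre c post, Γ => pre ++ [Item.brk (plug c Γ)] ++ post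

/-- Derivability in `Lb*` (the Lambek calculus with brackets, allowing empty
antecedents). -/
inductive DerLb : Cfg → Fm → Prop where
  | ax (p : ℕ) : DerLb [.fml (.var p)] (.var p)
  | ldivL (Δ : Ctx) (Pi : Cfg) (A B C : Fm) :
      DerLb Pi A → DerLb (plug Δ [.fml B]) C →
      DerLb (plug Δ (Pi ++ [.fml (.ldiv A B)])) C
  | ldivR (Pi : Cfg) (A B : Fm) :
      DerLb (.fml A :: Pi) B → DerLb Pi (.ldiv A B)
  | rdivL (Δ : Ctx) (Pi : Cfg) (A B C : Fm) :
      DerLb Pi A → DerLb (plug Δ [.fml B]) C →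
      DerLb (plug Δ (.fml (.rdiv B A) :: Pi)) C
  | rdivR (Pi : Cfg) (A B : Fm) :
      DerLb (Pi ++ [.fml A]) B → DerLb Pi (.rdiv B A)
  | mulL (Δ : Ctx) (A B C : Fm) :
      DerLb (plug Δ [.fml A, .fml B]) C → DerLb (plug Δ [.fml (.mul A B)]) C
  | mulR (Γ Δ : Cfg) (A B : Fm) :
      DerLb Γ A → DerLb Δ B → DerLb (Γ ++ Δ) (.mul A B)
  | diaL (Δ : Ctx) (A C : Fm) :
      DerLb (plug Δ [.brk [.fml A]]) C → DerLb (plug Δ [.fml (.dia A)]) C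
  | diaR (Pi : Cfg) (A : Fm) :
      DerLb Pi A → DerLb [.brk Pi] (.dia A)
  | boxL (Δ : Ctx) (A C : Fm) :
      DerLb (plug Δ [.fml A]) C → DerLb (plug Δ [.brk [.fml (.box A)]]) C
  | boxR (Pi : Cfg) (A : Fm) :
      DerLb [.brk Pi] A → DerLb Pi (.box A)

/-- Formulas of the plain Lambek calculus `L*` (no bracket modalities). -/
inductive PF where
  | var : ℕ → PF
  | mul : PF → PF → PF        -- A · B
  | ldiv : PF → PF → PF       -- A \ B
  | rdiv : PF → PF → PF       -- B / A   (rdiv B A)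

/-- Derivability in `L*` (the Lambek calculus allowing empty antecedents). -/
inductive DerL : List PF → PF → Prop where
  | ax (p : ℕ) : DerL [.var p] (.var p)
  | ldivL (Δ₁ Δ₂ Pi : List PF) (A B C : PF) :
      DerL Pi A → DerL (Δ₁ ++ [B] ++ Δ₂) C →
      DerL (Δ₁ ++ Pi ++ [.ldiv A B] ++ Δ₂) C
  | ldivR (Pi : List PF) (A B : PF) :
      DerL (A :: Pi) B → DerL Pi (.ldiv A B)
  | rdivL (Δ₁ Δ₂ Pi : List PF) (A B C : PF) :
      DerL Pi A → DerL (Δ₁ ++ [B] ++ Δ₂) C →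
      DerL (Δ₁ ++ [.rdiv B A] ++ Pi ++ Δ₂) C
  | rdivR (Pi : List PF) (A B : PF) :
      DerL (Pi ++ [A]) B → DerL Pi (.rdiv B A)
  | mulL (Δ₁ Δ₂ : List PF) (A B C : PF) :
      DerL (Δ₁ ++ [A, B] ++ Δ₂) C → DerL (Δ₁ ++ [.mul A B] ++ Δ₂) C
  | mulR (Γ Δ : List PF) (A B : PF) :
      DerL Γ A → DerL Δ B → DerL (Γ ++ Δ) (.mul A B)

/-- The fresh variable `r` (fresh since translated variables are shifted
by 2). -/
def rV : PF := .var 0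
/-- The fresh variable `s`. -/
def sV : PF := .var 1

/-- The Versmissen-style translation on formulas: `tr(p_i) = p_i` (shifted to
keep `r`, `s` fresh), `tr` commutes with `\`, `/`, `·`, `tr(⟨⟩A) = r·tr(A)·s`,
`tr([]⁻¹A) = r\tr(A)/s`. -/
def trF : Fm → PF
  | .var i => .var (i + 2)
  | .mul A B => .mul (trF A) (trF B)
  | .ldiv A B => .ldiv (trF A) (trF B)
  | .rdiv B A => .rdiv (trF B) (trF A)
  | .dia A => .mul (.mul rV (trF A)) sV
  | .box A => .ldiv rV (.rdiv (trF A) sV)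

mutual
/-- Translation of an item: `tr([Γ]) = r, tr(Γ), s`. -/
def trI : Item → List PF
  | .fml A => [trF A]
  | .brk Γ => rV :: (trC Γ ++ [sV])
/-- Translation of a configuration. -/
def trC : Cfg → List PF
  | [] => []
  | x :: xs => trI x ++ trC xs
end

/-! Brackets translate to the delimiters `r … s`, so a context translates to a fixed prefix
and suffix around its hole and every `Lb*` rule on a context becomes the `L*` rule on that
prefix and suffix. The modal rules become two-step `L*` derivations: the `⟨⟩` rules are two
product rules, the `[]⁻¹` rules a `\` and a `/` rule whose arguments are the delimiters. -/

@[simp] lemma trC_nil : trC [] = [] := by simp [trC]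

@[simp] lemma trC_cons (x : Item) (Γ : Cfg) : trC (x :: Γ) = trI x ++ trC Γ := by simp [trC]

@[simp] lemma trI_fml (A : Fm) : trI (.fml A) = [trF A] := by simp [trI]

@[simp] lemma trI_brk (Γ : Cfg) : trI (.brk Γ) = rV :: (trC Γ ++ [sV]) := by simp [trI]

@[simp] lemma trC_append (Γ Δ : Cfg) : trC (Γ ++ Δ) = trC Γ ++ trC Δ := by
  induction Γ with
  | nil => simp
  | cons x xs ih => simp [ih]

def trPre : Ctx → List PF
  | .top pre _ => trC pre
  | .nest pre c _ => trC pre ++ rV :: trPre c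

def trPost : Ctx → List PF
  | .top _ post => trC post
  | .nest _ c post => trPost c ++ sV :: trC post

@[simp] lemma trC_plug (Δ : Ctx) (Γ : Cfg) :
    trC (plug Δ Γ) = trPre Δ ++ trC Γ ++ trPost Δ := by
  induction Δ with
  | top pre post => simp [plug, trPre, trPost]
  | nest pre c post ih => simp [plug, trPre, trPost, ih]

namespace DerL

theorem refl : ∀ A : PF, DerL [A] A
  | .var p => ax p
  | .mul A B => by simpa using mulL [] [] _ _ _ (mulR [A] [B] _ _ (refl A) (refl B))
  | .ldiv A B => ldivR _ _ _ (by simpa using ldivL [] [] [A] _ _ _ (refl A) (refl B))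
  | .rdiv B A => rdivR _ _ _ (by simpa using rdivL [] [] [A] _ _ _ (refl A) (refl B))

variable {Δ₁ Δ₂ Γ : List PF} {A C R S : PF}

theorem mul_mul_left (h : DerL (Δ₁ ++ [R, A, S] ++ Δ₂) C) :
    DerL (Δ₁ ++ [.mul (.mul R A) S] ++ Δ₂) C := by
  have h₁ := mulL Δ₁ (S :: Δ₂) _ _ _ (by simpa using h)
  exact mulL Δ₁ Δ₂ _ _ _ (by simpa using h₁)

theorem mul_mul_right (h : DerL Γ A) : DerL (R :: Γ ++ [S]) (.mul (.mul R A) S) := by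
  simpa using mulR _ _ _ _ (mulR [R] Γ _ _ (refl R) h) (refl S)

theorem ldiv_rdiv_left (h : DerL (Δ₁ ++ [A] ++ Δ₂) C) :
    DerL (Δ₁ ++ [R, .ldiv R (.rdiv A S), S] ++ Δ₂) C := by
  have h₁ := rdivL Δ₁ Δ₂ [S] _ _ _ (refl S) h
  simpa using ldivL Δ₁ (S :: Δ₂) [R] _ _ _ (refl R) (by simpa using h₁)

theorem ldiv_rdiv_right (h : DerL (R :: Γ ++ [S]) A) : DerL Γ (.ldiv R (.rdiv A S)) :=
  ldivR _ _ _ (rdivR _ _ _ (by simpa using h))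

end DerL

/-- If a sequent `Γ → C` is derivable in the Lambek calculus with brackets
`Lb*`, then its bracket-free translation is derivable in the Lambek calculus
`L*`. -/
theorem stmt12 (Γ : Cfg) (C : Fm) (h : DerLb Γ C) : DerL (trC Γ) (trF C) := by
  induction h with
  | ax p => exact DerL.ax (p + 2)
  | ldivL Δ Pi A B C _ _ ih₁ ih₂ =>
      simpa [trF] using DerL.ldivL _ _ _ _ _ _ ih₁ (by simpa using ih₂)
  | ldivR Pi A B _ ih => exact DerL.ldivR _ _ _ (by simpa using ih)
  | rdivL Δ Pi A B C _ _ ih₁ ih₂ =>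
      simpa [trF] using DerL.rdivL _ _ _ _ _ _ ih₁ (by simpa using ih₂)
  | rdivR Pi A B _ ih => exact DerL.rdivR _ _ _ (by simpa using ih)
  | mulL Δ A B C _ ih => simpa [trF] using DerL.mulL _ _ _ _ _ (by simpa using ih)
  | mulR Γ Δ A B _ _ ih₁ ih₂ => simpa [trF] using DerL.mulR _ _ _ _ ih₁ ih₂
  | diaL Δ A C _ ih => simpa [trF] using DerL.mul_mul_left (by simpa using ih)
  | diaR Pi A _ ih => simpa [trF] using DerL.mul_mul_right ih
  | boxL Δ A C _ ih => simpa [trF] using DerL.ldiv_rdiv_left (by simpa using ih)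
  | boxR Pi A _ ih => exact DerL.ldiv_rdiv_right (by simpa using ih)
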